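/- arXiv:2203.09363 — 10 statements merged into one kernel-verified Lean document; each statement's English description precedes it below -/
import Mathlib

section
/- Fix integers m0, N0 ≥ 1. Let m, N, i ≥ 1 be integers with m0 = i·m and N0 = ⌊N/i⌋, and define the linear map H : ℝ^{N0+1} → ℝ^{N+1} by (Ha)_ℓ = a_n if ℓ = n·i for some integer 0 ≤ n ≤ N0, and (Ha)_ℓ = 0 otherwise. If a* ∈ ℝ^{N0+1} satisfies Q^{(m0,N0)}(a*) = a*, then Ha* ∈ ℝ^{N+1} satisfies Q^{(m,N)}(Ha*) = Ha*. -/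
/-- The quadratic matching map `Q^{(m,N)} : ℝ^{N+1} → ℝ^{N+1}`,
`Q_n(a) = 2·∑_{j=1}^{N−n} cos(mπ(n−j)/3)·a_j·a_{n+j}
        + ∑_{j=0}^{n} cos(mπ(n−2j)/3)·a_j·a_{n−j}`. -/
noncomputable def Qmap (m N : ℕ) (a : ℕ → ℝ) (n : ℕ) : ℝ :=
  2 * ∑ j ∈ Finset.Icc 1 (N - n),
      Real.cos ((m : ℝ) * Real.pi * ((n : ℝ) - (j : ℝ)) / 3) * a j * a (n + j)
  + ∑ j ∈ Finset.range (n + 1),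
      Real.cos ((m : ℝ) * Real.pi * ((n : ℝ) - 2 * (j : ℝ)) / 3) * a j * a (n - j)

/-- The harmonic embedding `H : ℝ^{N0+1} → ℝ^{N+1}`:
`(Ha)_ℓ = a_n` if `ℓ = n·i` for some `0 ≤ n ≤ N0`, and `0` otherwise. -/
noncomputable def Hmap (i N₀ : ℕ) (a : ℕ → ℝ) : ℕ → ℝ :=
  fun ℓ => if i ∣ ℓ ∧ ℓ / i ≤ N₀ then a (ℓ / i) else 0

lemma Hmap_mul {i : ℕ} (N₀ : ℕ) (hi : 1 ≤ i) (a : ℕ → ℝ) {k : ℕ} (hk : k ≤ N₀) :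
    Hmap i N₀ a (i * k) = a k := by
  have h : (i * k) / i = k := Nat.mul_div_cancel_left k (by omega)
  simp [Hmap, h, hk, Dvd.intro k rfl]

lemma Hmap_not_dvd {i : ℕ} (N₀ : ℕ) (a : ℕ → ℝ) {ℓ : ℕ} (h : ¬ i ∣ ℓ) :
    Hmap i N₀ a ℓ = 0 := by
  simp [Hmap, h]

lemma Hmap_gt {i : ℕ} (N₀ : ℕ) (hi : 1 ≤ i) (a : ℕ → ℝ) {k : ℕ} (hk : N₀ < k) :
    Hmap i N₀ a (i * k) = 0 := by
  have h : (i * k) / i = k := Nat.mul_div_cancel_left k (by omega)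
  simp [Hmap, h]
  omega

/-- fixed points of `Q^{(m0,N0)}` embed via `H` into fixed points of
`Q^{(m,N)}` whenever `m0 = i·m` and `N0 = ⌊N/i⌋`. -/
theorem Qmap_harmonic_embedding (m₀ N₀ m N i : ℕ)
    (hm₀ : 1 ≤ m₀) (hN₀ : 1 ≤ N₀) (hm : 1 ≤ m) (hN : 1 ≤ N) (hi : 1 ≤ i)
    (hmi : m₀ = i * m) (hNi : N₀ = N / i)
    (a : ℕ → ℝ) (ha : ∀ n ≤ N₀, Qmap m₀ N₀ a n = a n) :
    ∀ ℓ ≤ N, Qmap m N (Hmap i N₀ a) ℓ = Hmap i N₀ a ℓ := by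
  intro ℓ hℓ
  by_cases hdvd : i ∣ ℓ
  · obtain ⟨n, rfl⟩ := hdvd
    have hiN : i * N₀ ≤ N := by
      rw [hNi, mul_comm]; exact Nat.div_mul_le_self N i
    have hn : n ≤ N₀ := by
      rw [hNi]
      exact (Nat.le_div_iff_mul_le (by omega)).mpr (by rw [mul_comm]; exact hℓ)
    have hinj : ∀ x ∈ Finset.Icc 1 (N₀ - n), ∀ y ∈ Finset.Icc 1 (N₀ - n),
        i * x = i * y → x = y := by
      intro x _ y _ h
      exact Nat.eq_of_mul_eq_mul_left (by omega) h
    have hinj2 : ∀ x ∈ Finset.range (n + 1), ∀ y ∈ Finset.range (n + 1),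
        i * x = i * y → x = y := by
      intro x _ y _ h
      exact Nat.eq_of_mul_eq_mul_left (by omega) h
    have hbℓ : Hmap i N₀ a (i * n) = a n := Hmap_mul N₀ hi a hn
    have h1 : ∑ j ∈ Finset.Icc 1 (N - i * n),
        Real.cos ((m : ℝ) * Real.pi * (((i*n : ℕ) : ℝ) - (j : ℝ)) / 3)
          * Hmap i N₀ a j * Hmap i N₀ a (i*n + j)
        = ∑ k ∈ Finset.Icc 1 (N₀ - n),
        Real.cos ((m₀ : ℝ) * Real.pi * ((n : ℝ) - (k : ℝ)) / 3) * a k * a (n + k) := by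
      have hsub : (Finset.Icc 1 (N₀ - n)).image (fun k => i * k)
          ⊆ Finset.Icc 1 (N - i * n) := by
        intro x hx
        simp only [Finset.mem_image, Finset.mem_Icc] at hx
        obtain ⟨k, ⟨hk1, hk2⟩, rfl⟩ := hx
        simp only [Finset.mem_Icc]
        have h3 : i * k + i * n ≤ i * N₀ := by
          rw [← Nat.mul_add]; exact Nat.mul_le_mul_left i (by omega)
        have h4 : 1 ≤ i * k := Nat.mul_pos (by omega) (by omega)
        omega
      have hzero : ∀ j ∈ Finset.Icc 1 (N - i * n),
          j ∉ (Finset.Icc 1 (N₀ - n)).image (fun k => i * k) →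
          Real.cos ((m : ℝ) * Real.pi * (((i*n : ℕ) : ℝ) - (j : ℝ)) / 3)
            * Hmap i N₀ a j * Hmap i N₀ a (i*n + j) = 0 := by
        intro j hj hnim
        simp only [Finset.mem_Icc] at hj
        by_cases hij : i ∣ j
        · obtain ⟨k, rfl⟩ := hij
          have hk1 : 1 ≤ k := by
            rcases Nat.eq_zero_or_pos k with rfl | h
            · exact absurd hj.1 (by simp)
            · exact h
          by_cases hkn : n + k ≤ N₀
          · exact absurd (Finset.mem_image.mpr
              ⟨k, Finset.mem_Icc.mpr ⟨hk1, by omega⟩, rfl⟩) hnim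
          · have : Hmap i N₀ a (i * n + i * k) = 0 := by
              rw [← Nat.mul_add]
              exact Hmap_gt N₀ hi a (by omega)
            rw [this, mul_zero]
        · rw [Hmap_not_dvd N₀ a hij, mul_zero, zero_mul]
      rw [← Finset.sum_subset hsub hzero, Finset.sum_image hinj]
      refine Finset.sum_congr rfl fun k hk => ?_
      simp only [Finset.mem_Icc] at hk
      have hbk : Hmap i N₀ a (i * k) = a k := Hmap_mul N₀ hi a (by omega)
      have hbnk : Hmap i N₀ a (i * n + i * k) = a (n + k) := by
        rw [← Nat.mul_add]; exact Hmap_mul N₀ hi a (by omega)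
      rw [hbk, hbnk]
      congr 1
      rw [hmi]
      push_cast
      ring
    have h2 : ∑ j ∈ Finset.range (i * n + 1),
        Real.cos ((m : ℝ) * Real.pi * (((i*n : ℕ) : ℝ) - 2 * (j : ℝ)) / 3)
          * Hmap i N₀ a j * Hmap i N₀ a (i*n - j)
        = ∑ k ∈ Finset.range (n + 1),
        Real.cos ((m₀ : ℝ) * Real.pi * ((n : ℝ) - 2 * (k : ℝ)) / 3) * a k * a (n - k) := by
      have hsub : (Finset.range (n + 1)).image (fun k => i * k)
          ⊆ Finset.range (i * n + 1) := by
        intro x hx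
        simp only [Finset.mem_image, Finset.mem_range] at hx
        obtain ⟨k, hk, rfl⟩ := hx
        simp only [Finset.mem_range]
        have := Nat.mul_le_mul_left i (show k ≤ n by omega)
        omega
      have hzero : ∀ j ∈ Finset.range (i * n + 1),
          j ∉ (Finset.range (n + 1)).image (fun k => i * k) →
          Real.cos ((m : ℝ) * Real.pi * (((i*n : ℕ) : ℝ) - 2 * (j : ℝ)) / 3)
            * Hmap i N₀ a j * Hmap i N₀ a (i*n - j) = 0 := by
        intro j hj hnim
        simp only [Finset.mem_range] at hj
        by_cases hij : i ∣ j
        · exfalso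
          apply hnim
          obtain ⟨k, rfl⟩ := hij
          simp only [Finset.mem_image, Finset.mem_range]
          refine ⟨k, ?_, rfl⟩
          by_contra hc
          have h5 := Nat.mul_le_mul_left i (show n + 1 ≤ k by omega)
          have h6 : i * (n + 1) = i * n + i := by ring
          omega
        · rw [Hmap_not_dvd N₀ a hij, mul_zero, zero_mul]
      rw [← Finset.sum_subset hsub hzero, Finset.sum_image hinj2]
      refine Finset.sum_congr rfl fun k hk => ?_
      simp only [Finset.mem_range] at hk
      have hbk : Hmap i N₀ a (i * k) = a k := Hmap_mul N₀ hi a (by omega)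
      have hsubm : i * n - i * k = i * (n - k) := (Nat.mul_sub i n k).symm
      have hbnk : Hmap i N₀ a (i * n - i * k) = a (n - k) := by
        rw [hsubm]; exact Hmap_mul N₀ hi a (by omega)
      rw [hbk, hbnk]
      congr 1
      rw [hmi]
      push_cast
      ring
    rw [hbℓ, ← ha n hn]
    unfold Qmap
    rw [h1, h2]
  · rw [Hmap_not_dvd N₀ a hdvd]
    unfold Qmap
    have e1 : (∑ j ∈ Finset.Icc 1 (N - ℓ),
        Real.cos ((m : ℝ) * Real.pi * ((ℓ : ℝ) - (j : ℝ)) / 3)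
          * Hmap i N₀ a j * Hmap i N₀ a (ℓ + j)) = 0 := by
      refine Finset.sum_eq_zero fun j hj => ?_
      by_cases hij : i ∣ j
      · have : ¬ i ∣ (ℓ + j) := fun hc => hdvd (by
          have := Nat.dvd_sub hc hij
          simpa using this)
        rw [Hmap_not_dvd N₀ a this, mul_zero]
      · rw [Hmap_not_dvd N₀ a hij, mul_zero, zero_mul]
    have e2 : (∑ j ∈ Finset.range (ℓ + 1),
        Real.cos ((m : ℝ) * Real.pi * ((ℓ : ℝ) - 2 * (j : ℝ)) / 3)
          * Hmap i N₀ a j * Hmap i N₀ a (ℓ - j)) = 0 := by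
      refine Finset.sum_eq_zero fun j hj => ?_
      simp only [Finset.mem_range] at hj
      by_cases hij : i ∣ j
      · have : ¬ i ∣ (ℓ - j) := fun hc => hdvd (by
          have := Nat.dvd_add hc hij
          rwa [Nat.sub_add_cancel (by omega)] at this)
        rw [Hmap_not_dvd N₀ a this, mul_zero]
      · rw [Hmap_not_dvd N₀ a hij, mul_zero, zero_mul]
    rw [e1, e2]
    ring
end

section
/- Let m, N ≥ 1 be integers with 6 ∣ m, and suppose a* = (a*_0,…,a*_N) ∈ ℝ^{N+1} satisfies Q(a*) = a*. Define b* ∈ ℝ^{N+1} by b*_0 = 1 − a*_0 and b*_ℓ = −a*_ℓ for 1 ≤ ℓ ≤ N. Then Q(b*) = b*. -/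
/-- for `6 ∣ m`, if `a*` is a fixed point of `Q`, then so is `b*` with
`b*_0 = 1 − a*_0` and `b*_ℓ = −a*_ℓ` for `1 ≤ ℓ ≤ N`. -/
theorem Qmap_dark_solution (m N : ℕ) (hm : 1 ≤ m) (hN : 1 ≤ N) (h6 : 6 ∣ m)
    (a : ℕ → ℝ) (ha : ∀ n ≤ N, Qmap m N a n = a n) :
    ∀ n ≤ N,
      Qmap m N (fun ℓ => if ℓ = 0 then 1 - a 0 else -a ℓ) n
        = (fun ℓ => if ℓ = 0 then 1 - a 0 else -a ℓ) n := by
  obtain ⟨k, rfl⟩ := h6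
  have hcos : ∀ z : ℤ, Real.cos (((6 * k : ℕ) : ℝ) * Real.pi * ((z : ℤ) : ℝ) / 3) = 1 := by
    intro z
    have h : ((6 * k : ℕ) : ℝ) * Real.pi * ((z : ℤ) : ℝ) / 3
        = ((k * z : ℤ) : ℝ) * (2 * Real.pi) := by
      push_cast; ring
    rw [h, Real.cos_int_mul_two_pi]
  have hQ : ∀ (c : ℕ → ℝ) (n : ℕ), Qmap (6 * k) N c n =
      2 * ∑ j ∈ Finset.Icc 1 (N - n), c j * c (n + j)
      + ∑ j ∈ Finset.range (n + 1), c j * c (n - j) := by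
    intro c n
    unfold Qmap
    congr 1
    · congr 1
      refine Finset.sum_congr rfl fun j hj => ?_
      have h : ((n : ℝ) - (j : ℝ)) = (((n : ℤ) - (j : ℤ) : ℤ) : ℝ) := by push_cast; ring
      rw [h, hcos ((n : ℤ) - (j : ℤ)), one_mul]
    · refine Finset.sum_congr rfl fun j hj => ?_
      have h : ((n : ℝ) - 2 * (j : ℝ)) = (((n : ℤ) - 2 * (j : ℤ) : ℤ) : ℝ) := by push_cast; ring
      rw [h, hcos ((n : ℤ) - 2 * (j : ℤ)), one_mul]
  intro n hn
  have ha' : 2 * ∑ j ∈ Finset.Icc 1 (N - n), a j * a (n + j)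
      + ∑ j ∈ Finset.range (n + 1), a j * a (n - j) = a n := by
    rw [← hQ a n]; exact ha n hn
  set b : ℕ → ℝ := fun ℓ => if ℓ = 0 then 1 - a 0 else -a ℓ with hb
  rw [hQ b n]
  have h1 : ∑ j ∈ Finset.Icc 1 (N - n), b j * b (n + j)
      = ∑ j ∈ Finset.Icc 1 (N - n), a j * a (n + j) := by
    refine Finset.sum_congr rfl fun j hj => ?_
    have hj1 : 1 ≤ j := (Finset.mem_Icc.mp hj).1
    have hj0 : j ≠ 0 := by omega
    have hnj : n + j ≠ 0 := by omega
    simp [hb, hj0, hnj]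
  by_cases hn0 : n = 0
  · subst hn0
    simp only [Nat.zero_add, Finset.range_one, Finset.sum_singleton, Nat.sub_zero,
      Nat.sub_self] at ha' h1 ⊢
    rw [h1]
    simp only [hb, if_pos rfl, ite_true]
    linear_combination ha'
  · have h2 : ∑ j ∈ Finset.range (n + 1), b j * b (n - j)
        = ∑ j ∈ Finset.range (n + 1), a j * a (n - j) - 2 * a n := by
      have hpt : ∀ j ∈ Finset.range (n + 1),
          b j * b (n - j) = a j * a (n - j)
            + ((if j = 0 then -a n else 0) + (if j = n then -a n else 0)) := by
        intro j hj
        have hjn : j ≤ n := by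
          have := Finset.mem_range.mp hj; omega
        by_cases hj0 : j = 0
        · subst hj0
          have h0n : (0 : ℕ) ≠ n := fun h => hn0 h.symm
          simp only [hb, Nat.sub_zero, if_pos rfl, if_neg hn0, if_neg h0n, ite_true]
          ring
        · by_cases hjn' : j = n
          · subst hjn'
            simp only [hb, Nat.sub_self, if_pos rfl, if_neg hj0, ite_true]
            ring
          · have hnj : n - j ≠ 0 := by omega
            simp only [hb, if_neg hj0, if_neg hnj, if_neg hjn']
            ring
      rw [Finset.sum_congr rfl hpt, Finset.sum_add_distrib, Finset.sum_add_distrib]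
      simp only [Finset.sum_ite_eq', Finset.mem_range, Nat.lt_succ_iff, Nat.zero_le,
        le_refl, if_pos]
      ring
    rw [h1, h2]
    have hbn : b n = -a n := by simp [hb, hn0]
    rw [hbn]
    linear_combination ha'
end

section
/- (Newton–Kantorovich-type root theorem.) Let F : ℝ^d → ℝ^d be continuously differentiable, and fix a norm ‖·‖ on ℝ^d together with its induced operator norm on linear maps. Suppose there are constants 0 < κ < 1 and ρ > 0, a vector w0 ∈ ℝ^d, and an invertible matrix A ∈ ℝ^{d×d} such that (1) ‖I − A^{−1}·DF(w)‖ ≤ κ for all w with ‖w − w0‖ ≤ ρ, and (2) ‖A^{−1}·F(w0)‖ ≤ (1 − κ)ρ. Then F has a unique root w* in the closed ball {w : ‖w − w0‖ ≤ ρ}, and this root satisfies ‖w* − w0‖ ≤ (1 − κ)^{−1}·‖A^{−1}·F(w0)‖. -/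
/-!
The Newton-like map `w ↦ w - A⁻¹ F w` has derivative `I - A⁻¹ DF(w)`, so by the mean value
inequality it is a `κ`-contraction on the closed ball of radius `ρ` about `w₀`. It moves the
centre by `‖A⁻¹ F w₀‖ ≤ (1 - κ) ρ`, hence maps the ball into itself, and the Banach fixed point
theorem gives a unique fixed point in the ball, i.e. a unique root of `F`, together with the
a priori bound `‖w - w₀‖ ≤ ‖A⁻¹ F w₀‖ / (1 - κ)`.
-/

open Set Metric Function
open scoped NNReal

section FixedPoint

variable {α : Type*} {K : ℝ≥0} {f : α → α} {x : α} {ρ : ℝ}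

theorem LipschitzOnWith.mapsTo_closedBall [PseudoMetricSpace α]
    (hf : LipschitzOnWith K f (closedBall x ρ)) (hx : dist x (f x) ≤ (1 - K) * ρ) :
    MapsTo f (closedBall x ρ) (closedBall x ρ) := by
  intro y hy
  have hρ : 0 ≤ ρ := dist_nonneg.trans hy
  have hxρ : x ∈ closedBall x ρ := mem_closedBall_self hρ
  rw [mem_closedBall] at hy ⊢
  calc dist (f y) x ≤ dist (f y) (f x) + dist (f x) x := dist_triangle _ _ _
    _ ≤ K * dist y x + (1 - K) * ρ := by
        rw [dist_comm (f x)]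
        exact add_le_add (hf.dist_le_mul y (mem_closedBall.2 hy) x hxρ) hx
    _ ≤ K * ρ + (1 - K) * ρ := by gcongr
    _ = ρ := by ring

theorem LipschitzOnWith.exists_unique_isFixedPt_closedBall [MetricSpace α] [CompleteSpace α]
    (hK : K < 1) (hf : LipschitzOnWith K f (closedBall x ρ))
    (hx : dist x (f x) ≤ (1 - K) * ρ) :
    ∃ y ∈ closedBall x ρ, IsFixedPt f y ∧ (∀ z ∈ closedBall x ρ, IsFixedPt f z → z = y) ∧
      dist x y ≤ dist x (f x) / (1 - K) := by
  have hρ : 0 ≤ ρ :=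
    nonneg_of_mul_nonneg_right (dist_nonneg.trans hx) (sub_pos.2 (by exact_mod_cast hK))
  have hxs : x ∈ closedBall x ρ := mem_closedBall_self hρ
  have hmaps := hf.mapsTo_closedBall hx
  have : CompleteSpace (closedBall x ρ) := isClosed_closedBall.completeSpace_coe
  have : Nonempty (closedBall x ρ) := ⟨⟨x, hxs⟩⟩
  have hcontr : ContractingWith K (hmaps.restrict f _ _) := ⟨hK, hf.mapsToRestrict hmaps⟩
  set y := ContractingWith.fixedPoint _ hcontr
  refine ⟨y, y.2, congrArg Subtype.val hcontr.fixedPoint_isFixedPt, ?_, ?_⟩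
  · intro z hz hfz
    exact congrArg Subtype.val (hcontr.fixedPoint_unique (x := ⟨z, hz⟩) (Subtype.ext hfz))
  · exact hcontr.dist_fixedPoint_le ⟨x, hxs⟩

end FixedPoint

section NewtonMap

variable {E F : Type*} [NormedAddCommGroup E] [NormedSpace ℝ E]
  [NormedAddCommGroup F] [NormedSpace ℝ F] {A : E ≃L[ℝ] F} {f : E → F} {w : E}

def newtonMap (A : E ≃L[ℝ] F) (f : E → F) (w : E) : E :=
  w - A.symm (f w)

theorem isFixedPt_newtonMap_iff : IsFixedPt (newtonMap A f) w ↔ f w = 0 := by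
  simp only [IsFixedPt, newtonMap, sub_eq_self, ContinuousLinearEquiv.map_eq_zero_iff]

theorem dist_self_newtonMap : dist w (newtonMap A f w) = ‖A.symm (f w)‖ := by
  rw [dist_eq_norm, newtonMap, sub_sub_cancel]

theorem hasFDerivAt_newtonMap (hf : DifferentiableAt ℝ f w) :
    HasFDerivAt (newtonMap A f)
      (ContinuousLinearMap.id ℝ E - (A.symm : F →L[ℝ] E).comp (fderiv ℝ f w)) w :=
  (hasFDerivAt_id w).sub ((A.symm : F →L[ℝ] E).hasFDerivAt.comp w hf.hasFDerivAt)

theorem lipschitzOnWith_newtonMap {K : ℝ≥0} {s : Set E} (hs : Convex ℝ s)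
    (hf : ∀ w ∈ s, DifferentiableAt ℝ f w)
    (hbound : ∀ w ∈ s,
      ‖ContinuousLinearMap.id ℝ E - (A.symm : F →L[ℝ] E).comp (fderiv ℝ f w)‖₊ ≤ K) :
    LipschitzOnWith K (newtonMap A f) s :=
  hs.lipschitzOnWith_of_nnnorm_fderiv_le
    (fun w hw => (hasFDerivAt_newtonMap (hf w hw)).differentiableAt)
    (fun w hw => (hasFDerivAt_newtonMap (A := A) (hf w hw)).fderiv ▸ hbound w hw)

end NewtonMap

theorem newton_kantorovich_root_general
    {E : Type*} [NormedAddCommGroup E] [NormedSpace ℝ E] [FiniteDimensional ℝ E]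
    (F : E → E) (hF : ContDiff ℝ 1 F)
    (κ ρ : ℝ) (hκ1 : κ < 1)
    (w₀ : E) (A : E ≃L[ℝ] E)
    (h1 : ∀ w : E, ‖w - w₀‖ ≤ ρ →
      ‖ContinuousLinearMap.id ℝ E - (A.symm : E →L[ℝ] E).comp (fderiv ℝ F w)‖ ≤ κ)
    (h2 : ‖(A.symm : E →L[ℝ] E) (F w₀)‖ ≤ (1 - κ) * ρ) :
    ∃ w : E, ‖w - w₀‖ ≤ ρ ∧ F w = 0 ∧
      (∀ w' : E, ‖w' - w₀‖ ≤ ρ → F w' = 0 → w' = w) ∧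
      ‖w - w₀‖ ≤ (1 - κ)⁻¹ * ‖(A.symm : E →L[ℝ] E) (F w₀)‖ := by
  have hball : ∀ w, w ∈ closedBall w₀ ρ ↔ ‖w - w₀‖ ≤ ρ := fun w => by
    rw [mem_closedBall, dist_eq_norm]
  have hρ : 0 ≤ ρ := nonneg_of_mul_nonneg_right ((norm_nonneg _).trans h2) (by linarith)
  have hκ : 0 ≤ κ := (norm_nonneg _).trans (h1 w₀ (by simpa using hρ))
  have hlip : LipschitzOnWith ⟨κ, hκ⟩ (newtonMap A F) (closedBall w₀ ρ) :=
    lipschitzOnWith_newtonMap (convex_closedBall w₀ ρ)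
      (fun w _ => (hF.differentiable one_ne_zero).differentiableAt)
      (fun w hw => h1 w ((hball w).1 hw))
  obtain ⟨w, hw, hfix, huniq, hdist⟩ := hlip.exists_unique_isFixedPt_closedBall
    (by exact_mod_cast hκ1) (by rwa [dist_self_newtonMap])
  rw [dist_self_newtonMap, dist_comm, dist_eq_norm, div_eq_inv_mul] at hdist
  exact ⟨w, (hball w).1 hw, isFixedPt_newtonMap_iff.1 hfix,
    fun w' hw' hw'0 => huniq w' ((hball w').2 hw') (isFixedPt_newtonMap_iff.2 hw'0), hdist⟩

/-- Newton–Kantorovich-type root theorem. Here `ℝ^d` with an arbitrary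
norm is modelled as a `d`-dimensional real normed vector space `E`; `DF(w)` is the
Fréchet derivative `fderiv ℝ F w`, and the invertible matrix `A` is a continuous
linear equivalence of `E`. -/
theorem newton_kantorovich_root
    (d : ℕ) (hd : 1 ≤ d)
    {E : Type*} [NormedAddCommGroup E] [NormedSpace ℝ E] [FiniteDimensional ℝ E]
    (hdim : Module.finrank ℝ E = d)
    (F : E → E) (hF : ContDiff ℝ 1 F)
    (κ ρ : ℝ) (hκ0 : 0 < κ) (hκ1 : κ < 1) (hρ : 0 < ρ)
    (w₀ : E) (A : E ≃L[ℝ] E)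
    (h1 : ∀ w : E, ‖w - w₀‖ ≤ ρ →
      ‖ContinuousLinearMap.id ℝ E - (A.symm : E →L[ℝ] E).comp (fderiv ℝ F w)‖ ≤ κ)
    (h2 : ‖(A.symm : E →L[ℝ] E) (F w₀)‖ ≤ (1 - κ) * ρ) :
    ∃ w : E, ‖w - w₀‖ ≤ ρ ∧ F w = 0 ∧
      (∀ w' : E, ‖w' - w₀‖ ≤ ρ → F w' = 0 → w' = w) ∧
      ‖w - w₀‖ ≤ (1 - κ)⁻¹ * ‖(A.symm : E →L[ℝ] E) (F w₀)‖ :=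
  newton_kantorovich_root_general F hF κ ρ hκ1 w₀ A h1 h2
end

section
/- Let m ≥ 1 be an integer, set C = 2·cos(mπ/3) and ε = (−1)^m. Suppose λ ∈ ℝ satisfies the quadratic equation (4 + 3εC³)·λ² + (2C + (1−ε)C³ − 4)·λ − (C − 1) = 0 and ((1−ε) + 2ελ)·λ ≥ 0. Then the triple (a_0, a_1, a_2) = ((1−2λ)/C, √(((1−ε) + 2ελ)·λ), λ) satisfies the N = 2 matching equations a_0 = C·a_1² + εC·a_2² + a_0², a_1 = 2a_1a_2 + C·a_0a_1, a_2 = εC·a_0a_2 + a_1². -/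
open Real

/- The substitution a₀ = (1 − 2λ)/C makes the a₁-equation an identity, and a₁² is chosen so that
the a₂-equation holds identically; the a₀-equation then reduces, after clearing C, to the
quadratic for λ. The only arithmetic input is C ≠ 0, since cos(mπ/3) = 0 would force
cos(mπ) = 4cos³(mπ/3) − 3cos(mπ/3) = 0. -/

theorem cos_int_mul_pi_div_three_ne_zero (k : ℤ) : cos (k * π / 3) ≠ 0 := by
  intro h
  have h3 : cos (k * π) = 0 := by
    rw [show (k : ℝ) * π = 3 * (k * π / 3) by ring, cos_three_mul, h]
    ring
  simpa [h3] using abs_cos_int_mul_pi k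

section MatchingEquations

variable {C ε lam a₁ : ℝ}

theorem matching_eq_zero (hC : C ≠ 0)
    (hquad : (4 + 3 * ε * C ^ 3) * lam ^ 2 + (2 * C + (1 - ε) * C ^ 3 - 4) * lam
      - (C - 1) = 0)
    (ha₁ : a₁ ^ 2 = ((1 - ε) + 2 * ε * lam) * lam) :
    (1 - 2 * lam) / C = C * a₁ ^ 2 + ε * C * lam ^ 2 + ((1 - 2 * lam) / C) ^ 2 := by
  rw [ha₁]
  field_simp
  linear_combination (-1) * hquad

theorem matching_eq_one (hC : C ≠ 0) :
    a₁ = 2 * a₁ * lam + C * ((1 - 2 * lam) / C) * a₁ := by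
  field_simp
  ring

theorem matching_eq_two (hC : C ≠ 0) (ha₁ : a₁ ^ 2 = ((1 - ε) + 2 * ε * lam) * lam) :
    lam = ε * C * ((1 - 2 * lam) / C) * lam + a₁ ^ 2 := by
  rw [ha₁]
  field_simp
  ring

end MatchingEquations

theorem N2_matching_solution_general (m : ℕ) (lam : ℝ)
    (C ε : ℝ) (hC : C = 2 * Real.cos ((m : ℝ) * Real.pi / 3))
    (hquad : (4 + 3 * ε * C ^ 3) * lam ^ 2 + (2 * C + (1 - ε) * C ^ 3 - 4) * lam
      - (C - 1) = 0)
    (hnonneg : 0 ≤ ((1 - ε) + 2 * ε * lam) * lam) :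
    let a₀ : ℝ := (1 - 2 * lam) / C
    let a₁ : ℝ := Real.sqrt (((1 - ε) + 2 * ε * lam) * lam)
    let a₂ : ℝ := lam
    a₀ = C * a₁ ^ 2 + ε * C * a₂ ^ 2 + a₀ ^ 2 ∧
    a₁ = 2 * a₁ * a₂ + C * a₀ * a₁ ∧
    a₂ = ε * C * a₀ * a₂ + a₁ ^ 2 := by
  have hC0 : C ≠ 0 := by
    rw [hC]
    exact mul_ne_zero two_ne_zero (mod_cast cos_int_mul_pi_div_three_ne_zero m)
  have ha₁ := sq_sqrt hnonneg
  exact ⟨matching_eq_zero hC0 hquad ha₁, matching_eq_one hC0, matching_eq_two hC0 ha₁⟩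

/-- for `m ≥ 1`, `C = 2·cos(mπ/3)`, `ε = (−1)^m`, and `λ` a real root of
`(4 + 3εC³)·λ² + (2C + (1−ε)C³ − 4)·λ − (C−1) = 0` with `((1−ε) + 2ελ)·λ ≥ 0`, the
triple `(a₀, a₁, a₂) = ((1−2λ)/C, √(((1−ε) + 2ελ)·λ), λ)` satisfies the `N = 2`
matching equations. -/
theorem N2_matching_solution (m : ℕ) (hm : 1 ≤ m) (lam : ℝ)
    (C ε : ℝ) (hC : C = 2 * Real.cos ((m : ℝ) * Real.pi / 3)) (hε : ε = (-1 : ℝ) ^ m)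
    (hquad : (4 + 3 * ε * C ^ 3) * lam ^ 2 + (2 * C + (1 - ε) * C ^ 3 - 4) * lam
      - (C - 1) = 0)
    (hnonneg : 0 ≤ ((1 - ε) + 2 * ε * lam) * lam) :
    let a₀ : ℝ := (1 - 2 * lam) / C
    let a₁ : ℝ := Real.sqrt (((1 - ε) + 2 * ε * lam) * lam)
    let a₂ : ℝ := lam
    a₀ = C * a₁ ^ 2 + ε * C * a₂ ^ 2 + a₀ ^ 2 ∧
    a₁ = 2 * a₁ * a₂ + C * a₀ * a₁ ∧
    a₂ = ε * C * a₀ * a₂ + a₁ ^ 2 :=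
  N2_matching_solution_general m lam C ε hC hquad hnonneg
end

section
/- Let m ≥ 1 be an integer with 2 ∤ m and 3 ∤ m, so that 2·cos(mπ/3) = 1 and (−1)^m = −1. Then every real solution (a_0, a_1, a_2) of the N = 2 matching equations a_0 = a_1² − a_2² + a_0², a_1 = 2a_1a_2 + a_0a_1, a_2 = −a_0a_2 + a_1² satisfies a_1 = 0. -/
/-- for `m ≥ 1` with `2 ∤ m` and `3 ∤ m` (so that `2·cos(mπ/3) = 1` and
`(−1)^m = −1`), every real solution `(a₀, a₁, a₂)` of the `N = 2` matching equations
`a₀ = a₁² − a₂² + a₀²`, `a₁ = 2a₁a₂ + a₀a₁`, `a₂ = −a₀a₂ + a₁²` satisfies `a₁ = 0`. -/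
theorem N2_matching_a1_zero (m : ℕ) (hm : 1 ≤ m) (h2 : ¬ 2 ∣ m) (h3 : ¬ 3 ∣ m)
    (a₀ a₁ a₂ : ℝ)
    (e0 : a₀ = a₁ ^ 2 - a₂ ^ 2 + a₀ ^ 2)
    (e1 : a₁ = 2 * a₁ * a₂ + a₀ * a₁)
    (e2 : a₂ = -(a₀ * a₂) + a₁ ^ 2) :
    a₁ = 0 := by
  by_contra h1
  have hc : 1 = 2 * a₂ + a₀ := by
    have := mul_right_cancel₀ h1 (by linarith [e1] : 1 * a₁ = (2 * a₂ + a₀) * a₁)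
    linarith
  have ha₂ : a₂ = 0 := by nlinarith [sq_nonneg a₂, sq_nonneg a₁]
  have : a₁ ^ 2 = 0 := by nlinarith
  exact h1 (pow_eq_zero_iff (n := 2) (by norm_num) |>.mp this)
end

section
/- Let m ≥ 1 be an integer with 3 ∣ m, set ε = (−1)^m and C = 2ε (= 2·cos(mπ/3)). Then the quadruple (a_0, a_1, a_2, a_3) = (ε/2, √((2−ε)/10), 0, −(ε/2)·√((2−ε)/10)) satisfies the N = 3 matching equations a_0 = C·a_1² + εC·a_2² + 2ε·a_3² + a_0², a_1 = 2a_1a_2 + C·a_2a_3 + C·a_0a_1, a_2 = C·a_1a_3 + εC·a_0a_2 + a_1², a_3 = 2ε·a_0a_3 + C·a_1a_2. -/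
/-- for `m ≥ 1` with `3 ∣ m`, `ε = (−1)^m` and `C = 2ε (= 2·cos(mπ/3))`,
the quadruple `(ε/2, √((2−ε)/10), 0, −(ε/2)·√((2−ε)/10))` satisfies the `N = 3`
matching equations. -/
theorem N3_matching_solution_threeDvd (m : ℕ) (hm : 1 ≤ m) (h3 : 3 ∣ m) :
    let ε : ℝ := (-1 : ℝ) ^ m
    let C : ℝ := 2 * ε
    let a₀ : ℝ := ε / 2
    let a₁ : ℝ := Real.sqrt ((2 - ε) / 10)
    let a₂ : ℝ := 0
    let a₃ : ℝ := -(ε / 2) * Real.sqrt ((2 - ε) / 10)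
    a₀ = C * a₁ ^ 2 + ε * C * a₂ ^ 2 + 2 * ε * a₃ ^ 2 + a₀ ^ 2 ∧
    a₁ = 2 * a₁ * a₂ + C * a₂ * a₃ + C * a₀ * a₁ ∧
    a₂ = C * a₁ * a₃ + ε * C * a₀ * a₂ + a₁ ^ 2 ∧
    a₃ = 2 * ε * a₀ * a₃ + C * a₁ * a₂ := by
  intro ε C a₀ a₁ a₂ a₃
  have hε : ε = 1 ∨ ε = -1 := by
    rcases Nat.even_or_odd m with h | h
    · exact Or.inl (Even.neg_one_pow h)
    · exact Or.inr (Odd.neg_one_pow h)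
  have hC : C = 2 * ε := rfl
  have ha₀ : a₀ = ε / 2 := rfl
  have ha₁ : a₁ = Real.sqrt ((2 - ε) / 10) := rfl
  have ha₂ : a₂ = 0 := rfl
  have ha₃ : a₃ = -(ε / 2) * a₁ := rfl
  clear_value a₃ a₂ a₁ a₀ C ε
  have hεle : ε ≤ 1 := by rcases hε with h | h <;> rw [h] <;> norm_num
  have hs : a₁ ^ 2 = (2 - ε) / 10 := by
    rw [ha₁]; exact Real.sq_sqrt (by nlinarith)
  have hε2 : ε ^ 2 = 1 := by rcases hε with h | h <;> rw [h] <;> norm_num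
  subst hC ha₀ ha₂ ha₃
  rcases hε with h | h <;> subst h <;>
    refine ⟨by nlinarith, by nlinarith, by nlinarith, by nlinarith⟩
end

section
/- Let λ ∈ ℝ satisfy 220·(λ−1)²·λ² + 90·(λ−1)·λ + 9 = 0 and (10·λ·(λ−1) + 3)/30 ≥ 0. Setting a_1 = √((10·λ·(λ−1) + 3)/30) and q = (110·λ·(λ−1) + 21)/6, the quadruple (a_0, a_1, a_2, a_3) = (λ, a_1, (1−2λ)·q, 2·q·a_1) satisfies the N = 3 matching equations for 6 ∣ m: a_0 = a_0² + 2a_1² + 2a_2² + 2a_3², a_1 = 2a_0a_1 + 2a_1a_2 + 2a_2a_3, a_2 = a_1² + 2a_0a_2 + 2a_1a_3, a_3 = 2a_0a_3 + 2a_1a_2. -/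
/-- if `λ` satisfies `220(λ−1)²λ² + 90(λ−1)λ + 9 = 0` and
`(10λ(λ−1) + 3)/30 ≥ 0`, then with `a₁ = √((10λ(λ−1)+3)/30)` and
`q = (110λ(λ−1)+21)/6`, the quadruple `(λ, a₁, (1−2λ)q, 2q·a₁)` satisfies the `N = 3`
matching equations for `6 ∣ m`. -/
theorem N3_matching_solution_sixDvd (lam : ℝ)
    (hpoly : 220 * (lam - 1) ^ 2 * lam ^ 2 + 90 * (lam - 1) * lam + 9 = 0)
    (hnonneg : 0 ≤ (10 * lam * (lam - 1) + 3) / 30) :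
    let a₁ : ℝ := Real.sqrt ((10 * lam * (lam - 1) + 3) / 30)
    let q : ℝ := (110 * lam * (lam - 1) + 21) / 6
    let a₀ : ℝ := lam
    let a₂ : ℝ := (1 - 2 * lam) * q
    let a₃ : ℝ := 2 * q * a₁
    a₀ = a₀ ^ 2 + 2 * a₁ ^ 2 + 2 * a₂ ^ 2 + 2 * a₃ ^ 2 ∧
    a₁ = 2 * a₀ * a₁ + 2 * a₁ * a₂ + 2 * a₂ * a₃ ∧
    a₂ = a₁ ^ 2 + 2 * a₀ * a₂ + 2 * a₁ * a₃ ∧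
    a₃ = 2 * a₀ * a₃ + 2 * a₁ * a₂ := by
  intro a₁ q a₀ a₂ a₃
  have hs : a₁ ^ 2 = (10 * lam * (lam - 1) + 3) / 30 := Real.sq_sqrt hnonneg
  have hq : q = (110 * lam * (lam - 1) + 21) / 6 := rfl
  have h0 : a₀ = lam := rfl
  have h2 : a₂ = (1 - 2 * lam) * q := rfl
  have h3 : a₃ = 2 * q * a₁ := rfl
  rw [h0, h2, h3, hq]
  refine ⟨?_, ?_, ?_, ?_⟩
  · linear_combination (-2 - 8 * ((110 * lam * (lam - 1) + 21) / 6) ^ 2) * hs +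
      (-(4400 * (lam * (lam - 1)) + 1035) / 270) * hpoly
  · linear_combination (-(55 : ℝ) / 9 * a₁ * (1 - 2 * lam)) * hpoly
  · linear_combination (-(1 + 4 * ((110 * lam * (lam - 1) + 21) / 6))) * hs +
      ((2 : ℝ) / 9) * hpoly
  · ring
end

section
/- Define the polynomials p(λ) = 6λ⁵ + 5λ⁴ − 20λ³ − 12λ² + 12λ + 3, Q(λ) = 6λ⁶ + 4λ⁵ − 10λ⁴ − 12λ² − 12λ + 19 and q(λ) = 3λ⁴ + 2λ³ − 10λ² − 4λ + 7. Let λ ∈ ℝ satisfy p(λ) = 0, Q(λ) > 0 and q(λ) ≥ 0, and set x₀ = 1/(2·√(Q(λ))), a_0 = 1/2 − x₀, a_1 = √(q(λ))·x₀, a_2 = (1−λ²)·x₀, a_3 = λ·a_1, a_4 = (λ² + λ − 1)·x₀. Then (a_0, a_1, a_2, a_3, a_4) satisfies the N = 4 matching equations for 6 ∣ m: a_0 = a_0² + 2a_1² + 2a_2² + 2a_3² + 2a_4², a_1 = 2a_0a_1 + 2a_1a_2 + 2a_2a_3 + 2a_3a_4, a_2 = a_1² + 2a_0a_2 + 2a_1a_3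 + 2a_2a_4, a_3 = 2a_0a_3 + 2a_1a_4 + 2a_1a_2, a_4 = a_2² + 2a_0a_4 + 2a_1a_3. -/
/-- let `p(λ) = 6λ⁵+5λ⁴−20λ³−12λ²+12λ+3`,
`Q(λ) = 6λ⁶+4λ⁵−10λ⁴−12λ²−12λ+19`, `q(λ) = 3λ⁴+2λ³−10λ²−4λ+7`. If `p(λ) = 0`,
`Q(λ) > 0` and `q(λ) ≥ 0`, then with `x₀ = 1/(2√(Q(λ)))`, `a₀ = 1/2 − x₀`,
`a₁ = √(q(λ))·x₀`, `a₂ = (1−λ²)x₀`, `a₃ = λa₁`, `a₄ = (λ²+λ−1)x₀`, the quintuple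
`(a₀,…,a₄)` satisfies the `N = 4` matching equations for `6 ∣ m`. -/
theorem N4_matching_solution (lam : ℝ)
    (hp : 6 * lam ^ 5 + 5 * lam ^ 4 - 20 * lam ^ 3 - 12 * lam ^ 2 + 12 * lam + 3 = 0)
    (hQ : 0 < 6 * lam ^ 6 + 4 * lam ^ 5 - 10 * lam ^ 4 - 12 * lam ^ 2 - 12 * lam + 19)
    (hq : 0 ≤ 3 * lam ^ 4 + 2 * lam ^ 3 - 10 * lam ^ 2 - 4 * lam + 7) :
    let x₀ : ℝ := 1 / (2 * Real.sqrt
      (6 * lam ^ 6 + 4 * lam ^ 5 - 10 * lam ^ 4 - 12 * lam ^ 2 - 12 * lam + 19))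
    let a₀ : ℝ := 1 / 2 - x₀
    let a₁ : ℝ := Real.sqrt
      (3 * lam ^ 4 + 2 * lam ^ 3 - 10 * lam ^ 2 - 4 * lam + 7) * x₀
    let a₂ : ℝ := (1 - lam ^ 2) * x₀
    let a₃ : ℝ := lam * a₁
    let a₄ : ℝ := (lam ^ 2 + lam - 1) * x₀
    a₀ = a₀ ^ 2 + 2 * a₁ ^ 2 + 2 * a₂ ^ 2 + 2 * a₃ ^ 2 + 2 * a₄ ^ 2 ∧
    a₁ = 2 * a₀ * a₁ + 2 * a₁ * a₂ + 2 * a₂ * a₃ + 2 * a₃ * a₄ ∧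
    a₂ = a₁ ^ 2 + 2 * a₀ * a₂ + 2 * a₁ * a₃ + 2 * a₂ * a₄ ∧
    a₃ = 2 * a₀ * a₃ + 2 * a₁ * a₄ + 2 * a₁ * a₂ ∧
    a₄ = a₂ ^ 2 + 2 * a₀ * a₄ + 2 * a₁ * a₃ := by
  dsimp only
  set S : ℝ := Real.sqrt
      (6 * lam ^ 6 + 4 * lam ^ 5 - 10 * lam ^ 4 - 12 * lam ^ 2 - 12 * lam + 19) with hSdef
  set T : ℝ := Real.sqrt
      (3 * lam ^ 4 + 2 * lam ^ 3 - 10 * lam ^ 2 - 4 * lam + 7) with hTdef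
  have hS2 : S ^ 2 = 6 * lam ^ 6 + 4 * lam ^ 5 - 10 * lam ^ 4 - 12 * lam ^ 2 - 12 * lam + 19 :=
    Real.sq_sqrt hQ.le
  have hT2 : T ^ 2 = 3 * lam ^ 4 + 2 * lam ^ 3 - 10 * lam ^ 2 - 4 * lam + 7 :=
    Real.sq_sqrt hq
  have hS0 : S ≠ 0 := ne_of_gt (Real.sqrt_pos.mpr hQ)
  have hx1 : 2 * S * (1 / (2 * S)) = 1 := by field_simp
  refine ⟨?_, by ring, ?_, by ring, ?_⟩
  · linear_combination (-2 * (1 + lam ^ 2) * (1 / (2 * S)) ^ 2) * hT2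
      + ((1 / (2 * S)) ^ 2) * hS2 + (-(1 + 2 * S * (1 / (2 * S))) / 4) * hx1
  · linear_combination (-(1 + 2 * lam) * (1 / (2 * S)) ^ 2) * hT2
      + (-(1 / (2 * S)) ^ 2) * hp
  · linear_combination (-2 * lam * (1 / (2 * S)) ^ 2) * hT2
      + (-(1 / (2 * S)) ^ 2) * hp
end

section
/- Define p(λ) = 6λ⁵ + 5λ⁴ − 20λ³ − 12λ² + 12λ + 3, Q(λ) = 6λ⁶ + 4λ⁵ − 10λ⁴ − 12λ² − 12λ + 19 and q(λ) = 3λ⁴ + 2λ³ − 10λ² − 4λ + 7. Suppose (a_0, a_1, a_2, a_3, a_4) ∈ ℝ⁵ satisfies the N = 4 matching equations for 6 ∣ m (a_0 = a_0² + 2a_1² + 2a_2² + 2a_3² + 2a_4², a_1 = 2a_0a_1 + 2a_1a_2 + 2a_2a_3 + 2a_3a_4, a_2 = a_1² + 2a_0a_2 + 2a_1a_3 + 2a_2a_4, a_3 = 2a_0a_3 + 2a_1a_4 + 2a_1a_2, a_4 = a_2² + 2a_0a_4 + 2a_1a_3) with a_1 ≠ 0. Then, setting λ = a_3/a_1 and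 x₀ = 1/2 − a_0, we have x₀ ≠ 0, a_2 = (1−λ²)·x₀, a_4 = (λ² + λ − 1)·x₀, 4·Q(λ)·x₀² = 1, a_1² = q(λ)·x₀², and p(λ) = 0. -/
/-- converse for the `N = 4` matching equations with `6 ∣ m`: any
solution `(a₀,…,a₄)` with `a₁ ≠ 0` satisfies, with `λ = a₃/a₁` and `x₀ = 1/2 − a₀`:
`x₀ ≠ 0`, `a₂ = (1−λ²)x₀`, `a₄ = (λ²+λ−1)x₀`, `4·Q(λ)·x₀² = 1`, `a₁² = q(λ)·x₀²`,
and `p(λ) = 0`, where `p, Q, q` are as in the paper. -/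
theorem N4_matching_classification (a₀ a₁ a₂ a₃ a₄ : ℝ)
    (e0 : a₀ = a₀ ^ 2 + 2 * a₁ ^ 2 + 2 * a₂ ^ 2 + 2 * a₃ ^ 2 + 2 * a₄ ^ 2)
    (e1 : a₁ = 2 * a₀ * a₁ + 2 * a₁ * a₂ + 2 * a₂ * a₃ + 2 * a₃ * a₄)
    (e2 : a₂ = a₁ ^ 2 + 2 * a₀ * a₂ + 2 * a₁ * a₃ + 2 * a₂ * a₄)
    (e3 : a₃ = 2 * a₀ * a₃ + 2 * a₁ * a₄ + 2 * a₁ * a₂)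
    (e4 : a₄ = a₂ ^ 2 + 2 * a₀ * a₄ + 2 * a₁ * a₃)
    (ha₁ : a₁ ≠ 0) :
    let lam : ℝ := a₃ / a₁
    let x₀ : ℝ := 1 / 2 - a₀
    x₀ ≠ 0 ∧
    a₂ = (1 - lam ^ 2) * x₀ ∧
    a₄ = (lam ^ 2 + lam - 1) * x₀ ∧
    4 * (6 * lam ^ 6 + 4 * lam ^ 5 - 10 * lam ^ 4 - 12 * lam ^ 2 - 12 * lam + 19)
      * x₀ ^ 2 = 1 ∧
    a₁ ^ 2 = (3 * lam ^ 4 + 2 * lam ^ 3 - 10 * lam ^ 2 - 4 * lam + 7) * x₀ ^ 2 ∧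
    6 * lam ^ 5 + 5 * lam ^ 4 - 20 * lam ^ 3 - 12 * lam ^ 2 + 12 * lam + 3 = 0 := by
  intro lam x₀
  have hl : lam = a₃ / a₁ := rfl
  have hx₀ : x₀ = 1 / 2 - a₀ := rfl
  clear_value lam x₀
  have h3 : a₃ = lam * a₁ := by rw [hl]; field_simp
  subst h3
  have ha₀ : a₀ = 1 / 2 - x₀ := by rw [hx₀]; ring
  subst ha₀
  -- sum relation from e3
  have hs : a₂ + a₄ = lam * x₀ :=
    mul_left_cancel₀ ha₁ (by linear_combination (-(1 : ℝ)/2) * e3)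
  have h2 : a₂ = (1 - lam ^ 2) * x₀ :=
    mul_left_cancel₀ ha₁ (by linear_combination (-(1 : ℝ)/2) * e1 - lam * a₁ * hs)
  have h4 : a₄ = (lam ^ 2 + lam - 1) * x₀ := by linear_combination hs - h2
  rw [h2, h4] at e2 e4 e0
  have hq : a₁ ^ 2 = (3 * lam ^ 4 + 2 * lam ^ 3 - 10 * lam ^ 2 - 4 * lam + 7) * x₀ ^ 2 := by
    linear_combination e4 - e2
  have hp0 : (6 * lam ^ 5 + 5 * lam ^ 4 - 20 * lam ^ 3 - 12 * lam ^ 2 + 12 * lam + 3)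
      * x₀ ^ 2 = 0 := by
    linear_combination 2 * lam * e2 - (1 + 2 * lam) * e4
  have hQ : 4 * (6 * lam ^ 6 + 4 * lam ^ 5 - 10 * lam ^ 4 - 12 * lam ^ 2 - 12 * lam + 19)
      * x₀ ^ 2 = 1 := by
    linear_combination (-4 : ℝ) * e0 - (8 + 8 * lam ^ 2) * hq
  have hx : x₀ ≠ 0 := by
    intro h0
    rw [h0] at hQ
    norm_num at hQ
  have hp : 6 * lam ^ 5 + 5 * lam ^ 4 - 20 * lam ^ 3 - 12 * lam ^ 2 + 12 * lam + 3 = 0 := by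
    rcases mul_eq_zero.mp hp0 with h | h
    · exact h
    · exact absurd h (pow_ne_zero 2 hx)
  exact ⟨hx, h2, h4, hQ, hq, hp⟩
end

section
/- The quintic polynomial p(λ) = 6λ⁵ + 5λ⁴ − 20λ³ − 12λ² + 12λ + 3 has exactly five real roots λ₁ < λ₂ < λ₃ < λ₄ < λ₅, and they interlace as follows: λ₁ < (−1−√5)/2 < λ₂ < −1 < λ₃ < 0 < (−1+√5)/2 < λ₄ < 1 < λ₅. -/
open Polynomial Set

private noncomputable def pf : ℝ → ℝ := fun x => 6 * x ^ 5 + 5 * x ^ 4 - 20 * x ^ 3 - 12 * x ^ 2 + 12 * x + 3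

private lemma pf_cont : Continuous pf := by unfold pf; continuity

private lemma ivt_up (a b : ℝ) (hab : a ≤ b) (ha : pf a < 0) (hb : 0 < pf b) :
    ∃ x ∈ Ioo a b, pf x = 0 := by
  have h := intermediate_value_Ioo hab (pf_cont.continuousOn)
  have : (0:ℝ) ∈ Ioo (pf a) (pf b) := ⟨ha, hb⟩
  obtain ⟨x, hx, hx0⟩ := h this
  exact ⟨x, hx, hx0⟩

private lemma ivt_down (a b : ℝ) (hab : a ≤ b) (ha : 0 < pf a) (hb : pf b < 0) :
    ∃ x ∈ Ioo a b, pf x = 0 := by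
  have h := intermediate_value_Ioo' hab (pf_cont.continuousOn)
  have : (0:ℝ) ∈ Ioo (pf b) (pf a) := ⟨hb, ha⟩
  obtain ⟨x, hx, hx0⟩ := h this
  exact ⟨x, hx, hx0⟩

private noncomputable def Pq : Polynomial ℝ :=
  C 6 * X ^ 5 + C 5 * X ^ 4 - C 20 * X ^ 3 - C 12 * X ^ 2 + C 12 * X + C 3

private lemma Pq_eval (x : ℝ) : Pq.eval x = pf x := by
  simp [Pq, pf]

private lemma Pq_ne : Pq ≠ 0 := by
  intro h
  have : Pq.coeff 5 = 6 := by
    simp [Pq, coeff_X_pow]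
  rw [h] at this
  simp at this

private lemma Pq_natDegree : Pq.natDegree = 5 := by
  unfold Pq
  compute_degree!

/-- the quintic `p(λ) = 6λ⁵+5λ⁴−20λ³−12λ²+12λ+3` has exactly five real
roots `λ₁ < λ₂ < λ₃ < λ₄ < λ₅`, interlacing as
`λ₁ < (−1−√5)/2 < λ₂ < −1 < λ₃ < 0 < (−1+√5)/2 < λ₄ < 1 < λ₅`. -/
theorem quintic_five_real_roots :
    let p : ℝ → ℝ := fun x => 6 * x ^ 5 + 5 * x ^ 4 - 20 * x ^ 3 - 12 * x ^ 2 + 12 * x + 3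
    ∃ l₁ l₂ l₃ l₄ l₅ : ℝ,
      p l₁ = 0 ∧ p l₂ = 0 ∧ p l₃ = 0 ∧ p l₄ = 0 ∧ p l₅ = 0 ∧
      l₁ < (-1 - Real.sqrt 5) / 2 ∧ (-1 - Real.sqrt 5) / 2 < l₂ ∧
      l₂ < -1 ∧ (-1 : ℝ) < l₃ ∧ l₃ < 0 ∧
      (0 : ℝ) < (-1 + Real.sqrt 5) / 2 ∧ (-1 + Real.sqrt 5) / 2 < l₄ ∧
      l₄ < 1 ∧ (1 : ℝ) < l₅ ∧
      ∀ x : ℝ, p x = 0 → x = l₁ ∨ x = l₂ ∨ x = l₃ ∨ x = l₄ ∨ x = l₅ := by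
  intro p
  have hpeq : ∀ x, p x = pf x := fun x => rfl
  have hs5 : Real.sqrt 5 ^ 2 = 5 := Real.sq_sqrt (by norm_num)
  have hs5lo : (2:ℝ) < Real.sqrt 5 := by
    nlinarith [Real.sqrt_nonneg 5, hs5]
  have hs5hi : Real.sqrt 5 < 3 := by
    nlinarith [Real.sqrt_nonneg 5, hs5]
  set s := Real.sqrt 5 with hs
  set φm : ℝ := (-1 - s) / 2 with hφm
  set φp : ℝ := (-1 + s) / 2 with hφp
  -- sign values
  have key : ∀ y : ℝ, pf y = (y ^ 2 + y - 1) * (6 * y ^ 3 - y ^ 2 - 13 * y) + (3 - y) := by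
    intro y; unfold pf; ring
  have hpφm : 0 < pf φm := by
    have h0 : φm ^ 2 + φm - 1 = 0 := by
      rw [hφm]; field_simp; nlinarith [hs5]
    rw [key, h0]; rw [hφm]; nlinarith
  have hpφp : 0 < pf φp := by
    have h0 : φp ^ 2 + φp - 1 = 0 := by
      rw [hφp]; field_simp; nlinarith [hs5]
    rw [key, h0]; rw [hφp]; nlinarith
  have hpm2 : pf (-2) < 0 := by unfold pf; norm_num
  have hpm1 : pf (-1) < 0 := by unfold pf; norm_num
  have hp0 : 0 < pf 0 := by unfold pf; norm_num
  have hp1 : pf 1 < 0 := by unfold pf; norm_num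
  have hp2 : 0 < pf 2 := by unfold pf; norm_num
  -- interval endpoint orderings
  have hm2φm : (-2:ℝ) < φm := by rw [hφm]; linarith
  have hφmm1 : φm < -1 := by rw [hφm]; linarith
  have h0φp : (0:ℝ) < φp := by rw [hφp]; linarith
  have hφp1 : φp < 1 := by rw [hφp]; linarith
  -- five roots
  obtain ⟨l₁, hl₁m, hl₁⟩ := ivt_up (-2) φm (le_of_lt hm2φm) hpm2 hpφm
  obtain ⟨l₂, hl₂m, hl₂⟩ := ivt_down φm (-1) (le_of_lt hφmm1) hpφm hpm1
  obtain ⟨l₃, hl₃m, hl₃⟩ := ivt_up (-1) 0 (by norm_num) hpm1 hp0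
  obtain ⟨l₄, hl₄m, hl₄⟩ := ivt_down φp 1 (le_of_lt hφp1) hpφp hp1
  obtain ⟨l₅, hl₅m, hl₅⟩ := ivt_up 1 2 (by norm_num) hp1 hp2
  obtain ⟨_, h1b⟩ := hl₁m
  obtain ⟨h2a, h2b⟩ := hl₂m
  obtain ⟨h3a, h3b⟩ := hl₃m
  obtain ⟨h4a, h4b⟩ := hl₄m
  obtain ⟨h5a, _⟩ := hl₅m
  refine ⟨l₁, l₂, l₃, l₄, l₅, by rw [hpeq]; exact hl₁, by rw [hpeq]; exact hl₂,
    by rw [hpeq]; exact hl₃, by rw [hpeq]; exact hl₄, by rw [hpeq]; exact hl₅,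
    h1b, h2a, h2b, h3a, h3b, h0φp, h4a, h4b, h5a, ?_⟩
  intro x hx
  by_contra hcon
  push_neg at hcon
  obtain ⟨hx1, hx2, hx3, hx4, hx5⟩ := hcon
  -- distinctness
  have ord : l₁ < l₂ ∧ l₂ < l₃ ∧ l₃ < l₄ ∧ l₄ < l₅ := by
    refine ⟨by linarith, by linarith, by linarith, by linarith⟩
  -- six distinct roots of degree-5 polynomial: contradiction
  have hroot : ∀ y : ℝ, pf y = 0 → y ∈ Pq.roots := by
    intro y hy
    rw [mem_roots Pq_ne, IsRoot, Pq_eval]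
    exact hy
  have hfin : ({l₁, l₂, l₃, l₄, l₅, x} : Finset ℝ) ⊆ Pq.roots.toFinset := by
    intro y hy
    simp only [Finset.mem_insert, Finset.mem_singleton] at hy
    rw [Multiset.mem_toFinset]
    rcases hy with h|h|h|h|h|h <;> subst h
    · exact hroot _ hl₁
    · exact hroot _ hl₂
    · exact hroot _ hl₃
    · exact hroot _ hl₄
    · exact hroot _ hl₅
    · exact hroot _ (by rw [← hpeq]; exact hx)
  have hcard6 : ({l₁, l₂, l₃, l₄, l₅, x} : Finset ℝ).card = 6 := by
    obtain ⟨o1, o2, o3, o4⟩ := ord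
    have n1 : l₁ ∉ ({l₂, l₃, l₄, l₅, x} : Finset ℝ) := by
      simp only [Finset.mem_insert, Finset.mem_singleton, not_or]
      exact ⟨by linarith, by linarith, by linarith, by linarith, fun h => hx1 h.symm⟩
    have n2 : l₂ ∉ ({l₃, l₄, l₅, x} : Finset ℝ) := by
      simp only [Finset.mem_insert, Finset.mem_singleton, not_or]
      exact ⟨by linarith, by linarith, by linarith, fun h => hx2 h.symm⟩
    have n3 : l₃ ∉ ({l₄, l₅, x} : Finset ℝ) := by
      simp only [Finset.mem_insert, Finset.mem_singleton, not_or]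
      exact ⟨by linarith, by linarith, fun h => hx3 h.symm⟩
    have n4 : l₄ ∉ ({l₅, x} : Finset ℝ) := by
      simp only [Finset.mem_insert, Finset.mem_singleton, not_or]
      exact ⟨by linarith, fun h => hx4 h.symm⟩
    have n5 : l₅ ∉ ({x} : Finset ℝ) := by
      simp only [Finset.mem_singleton]
      exact fun h => hx5 h.symm
    rw [Finset.card_insert_of_notMem n1, Finset.card_insert_of_notMem n2,
      Finset.card_insert_of_notMem n3, Finset.card_insert_of_notMem n4,
      Finset.card_insert_of_notMem n5, Finset.card_singleton]
  have hle : Pq.roots.toFinset.card ≤ 5 := by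
    calc Pq.roots.toFinset.card ≤ Multiset.card Pq.roots := Multiset.toFinset_card_le _
    _ ≤ Pq.natDegree := Pq.card_roots'
    _ = 5 := Pq_natDegree
  have := Finset.card_le_card hfin
  omega
end
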